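/- arXiv:2405.20467 — 3 statements merged into one kernel-verified Lean document; each statement's English description precedes it below -/
import Mathlib

section
/- Let P be an irreducible, positive recurrent transition kernel on a countable state space S with unique stationary distribution d. Let f : S → [0,∞), c : S → [0,∞), and ε > 0, g ≥ 0 be such that for all q ∈ S, E[f²(q₁) − f²(q₀) | q₀ = q] ≤ −ε·c(q) + g, and suppose Σ_q d(q)·f²(q) < ∞. Then the stationary average cost satisfies Σ_q d(q)·c(q) ≤ g/ε. -/
/-!
Weight the drift inequality by `d` and sum over the states. Stationarity (after exchanging the
two sums, legitimate because every term is nonnegative) makes the weighted sums of `P f²` and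
of `f²` coincide, so the Lyapunov terms cancel and `ε Σ d c ≤ g Σ d = g` remains. The
integrability of `d f²` together with the drift bound makes every weighted sum finite.
-/

theorem tsum_mul_kernel_tsum_eq_of_stationary {S : Type*} {P : S → S → ℝ} {d h : S → ℝ}
    (hP0 : ∀ q q', 0 ≤ P q q') (hd0 : ∀ q, 0 ≤ d q) (hh0 : ∀ q, 0 ≤ h q)
    (hstat : ∀ q', ∑' q, d q * P q q' = d q')
    (hrow : ∀ q, Summable fun q' => P q q' * h q')
    (hdPh : Summable fun q => d q * ∑' q', P q q' * h q') :
    ∑' q, d q * ∑' q', P q q' * h q' = ∑' q, d q * h q := by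
  have hjoint : Summable (Function.uncurry fun q q' => d q * (P q q' * h q')) := by
    refine (summable_prod_of_nonneg fun p =>
      mul_nonneg (hd0 p.1) (mul_nonneg (hP0 p.1 p.2) (hh0 p.2))).mpr ⟨fun q => ?_, ?_⟩
    · exact (hrow q).mul_left (d q)
    · simpa only [tsum_mul_left] using hdPh
  calc ∑' q, d q * ∑' q', P q q' * h q'
      = ∑' q, ∑' q', d q * (P q q' * h q') := by simp only [tsum_mul_left]
    _ = ∑' q', ∑' q, d q * (P q q' * h q') := hjoint.tsum_comm.symm
    _ = ∑' q', (∑' q, d q * P q q') * h q' := by simp only [← tsum_mul_right, mul_assoc]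
    _ = ∑' q, d q * h q := by simp only [hstat]

theorem stationary_average_cost_bound_general
    {S : Type*}
    (P : S → S → ℝ) (d : S → ℝ) (f c : S → ℝ) (ε g : ℝ)
    (hP0 : ∀ q q', 0 ≤ P q q')
    (hd0 : ∀ q, 0 ≤ d q) (hd1 : HasSum d 1)
    (hstat : ∀ q', ∑' q, d q * P q q' = d q')
    (hc : ∀ q, 0 ≤ c q)
    (hε : 0 < ε)
    (hrow : ∀ q, Summable (fun q' => P q q' * f q' ^ 2))
    (hdrift : ∀ q, (∑' q', P q q' * f q' ^ 2) - f q ^ 2 ≤ -ε * c q + g)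
    (hint : Summable (fun q => d q * f q ^ 2)) :
    ∑' q, d q * c q ≤ g / ε := by
  set Pf : S → ℝ := fun q => ∑' q', P q q' * f q' ^ 2
  have hPf0 : ∀ q, 0 ≤ Pf q := fun q => tsum_nonneg fun q' => mul_nonneg (hP0 q q') (sq_nonneg _)
  have hweighted : ∀ q, d q * Pf q + ε * (d q * c q) ≤ d q * f q ^ 2 + d q * g := fun q => by
    nlinarith [mul_le_mul_of_nonneg_left (hdrift q) (hd0 q)]
  have hdg : Summable fun q => d q * g := hd1.summable.mul_right g
  have hdc : Summable fun q => d q * c q := by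
    refine (hint.add hdg).div_const ε |>.of_nonneg_of_le (fun q => mul_nonneg (hd0 q) (hc q))
      fun q => (le_div_iff₀ hε).mpr ?_
    nlinarith [hweighted q, mul_nonneg (hd0 q) (hPf0 q)]
  have hdPf : Summable fun q => d q * Pf q :=
    (hint.add hdg).of_nonneg_of_le (fun q => mul_nonneg (hd0 q) (hPf0 q)) fun q => by
      nlinarith [hweighted q, mul_nonneg (hd0 q) (hc q)]
  have hbalance : ∑' q, d q * Pf q = ∑' q, d q * f q ^ 2 :=
    tsum_mul_kernel_tsum_eq_of_stationary hP0 hd0 (fun q => sq_nonneg (f q)) hstat hrow hdPf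
  have hsum := (hdPf.add (hdc.mul_left ε)).tsum_le_tsum hweighted (hint.add hdg)
  rw [hdPf.tsum_add (hdc.mul_left ε), hint.tsum_add hdg, tsum_mul_left, hbalance,
    tsum_mul_right, hd1.tsum_eq] at hsum
  rw [le_div_iff₀ hε]
  linarith

/-- If `P` is a Markov kernel on a countable state space with stationary
distribution `d`, `f, c ≥ 0`, drift `Σ_{q'} P(q'|q) f²(q') - f²(q) ≤ -ε c(q) + g`,
and `Σ_q d(q) f²(q) < ∞`, then `Σ_q d(q) c(q) ≤ g/ε`. -/
theorem stationary_average_cost_bound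
    {S : Type*} [Countable S]
    (P : S → S → ℝ) (d : S → ℝ) (f c : S → ℝ) (ε g : ℝ)
    (hP0 : ∀ q q', 0 ≤ P q q') (hP1 : ∀ q, HasSum (P q) 1)
    (hd0 : ∀ q, 0 ≤ d q) (hd1 : HasSum d 1)
    (hstat : ∀ q', ∑' q, d q * P q q' = d q')
    (hf : ∀ q, 0 ≤ f q) (hc : ∀ q, 0 ≤ c q)
    (hε : 0 < ε) (hg : 0 ≤ g)
    (hrow : ∀ q, Summable (fun q' => P q q' * f q' ^ 2))
    (hdrift : ∀ q, (∑' q', P q q' * f q' ^ 2) - f q ^ 2 ≤ -ε * c q + g)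
    (hint : Summable (fun q => d q * f q ^ 2)) :
    ∑' q, d q * c q ≤ g / ε :=
  stationary_average_cost_bound_general P d f c ε g hP0 hd0 hd1 hstat hc hε hrow hdrift hint
end

section
/- Let V_π be a solution of Poisson's equation J_π + V_π(q) = c_π(q) + Σ_{q'} P_π(q'|q)·V_π(q') on a countable state space, with V_π(q) = E[Σ_{i=0}^{τ−1}(c_π(q_i) − J_π) | q₀ = q], where τ is the hitting time of a fixed state q* and costs c_π are nonnegative. Suppose the average cost satisfies J_π ≤ g/ε and the expected number of visits to a finite set B before hitting q* ∈ B is at most T_B/p_B² from any start state, and c_π(q) ≥ J_π for all q ∉ B. Then V_π(q) ≥ −(g/ε)·(T_B/p_B²) for every state q. -/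
open MeasureTheory Classical

/-! Outside `B` every summand `c(q_i) - J` is nonnegative, and inside `B` it is at least
`-J ≥ -(g/ε)` because costs are nonnegative. Hence, path by path, the accumulated relative cost
before hitting `q*` is at least `-(g/ε)` times the number of visits to `B`; taking expectations
and bounding the expected number of visits by `T_B/p_B²` gives the claim. -/

theorem neg_mul_indicator_le_sub {α : Type*} {c : α → ℝ} {B : Set α} {J M : ℝ}
    (hc : ∀ a, 0 ≤ c a) (hJM : J ≤ M) (hcout : ∀ a ∉ B, J ≤ c a) (a : α) :
    -M * (if a ∈ B then (1 : ℝ) else 0) ≤ c a - J := by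
  by_cases ha : a ∈ B
  · simp only [ha, if_true, mul_one]
    linarith [hc a]
  · simp only [ha, if_false, mul_zero]
    linarith [hcout a ha]

theorem neg_mul_visits_le_sum_sub {ι α : Type*} {c : α → ℝ} {B : Set α} {J M : ℝ}
    (hc : ∀ a, 0 ≤ c a) (hJM : J ≤ M) (hcout : ∀ a ∉ B, J ≤ c a) (s : Finset ι) (x : ι → α) :
    -M * ∑ i ∈ s, (if x i ∈ B then (1 : ℝ) else 0) ≤ ∑ i ∈ s, (c (x i) - J) := by
  rw [Finset.mul_sum]
  exact Finset.sum_le_sum fun i _ => neg_mul_indicator_le_sub hc hJM hcout (x i)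

theorem neg_mul_le_integral_of_forall_neg_mul_le {Ω : Type*} [MeasurableSpace Ω]
    {μ : Measure Ω} {N F : Ω → ℝ} {M T : ℝ} (hM : 0 ≤ M)
    (hN : Integrable N μ) (hF : Integrable F μ) (hNT : ∫ ω, N ω ∂μ ≤ T)
    (hNF : ∀ ω, -M * N ω ≤ F ω) :
    -M * T ≤ ∫ ω, F ω ∂μ :=
  calc -M * T ≤ -M * ∫ ω, N ω ∂μ := mul_le_mul_of_nonpos_left hNT (neg_nonpos.2 hM)
    _ = ∫ ω, -M * N ω ∂μ := (integral_const_mul _ _).symm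
    _ ≤ ∫ ω, F ω ∂μ := integral_mono (hN.const_mul _) hF hNF

theorem value_function_lower_bound_general
    {S : Type*}
    {Ω : Type*} [MeasurableSpace Ω]
    (ℙ : S → Measure Ω)
    (X : ℕ → Ω → S)
    (c : S → ℝ) (hc : ∀ s, 0 ≤ c s)
    (J g ε TB pB : ℝ)
    (hJ0 : 0 ≤ J) (hJ : J ≤ g / ε)
    (B : Set S) (qstar : S)
    (hcout : ∀ s ∉ B, J ≤ c s)
    (V : S → ℝ)
    (hVint : ∀ q, Integrable
      (fun ω => ∑ i ∈ Finset.range (sInf {k | X k ω = qstar}), (c (X i ω) - J)) (ℙ q))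
    (hV : ∀ q, V q =
      ∫ ω, ∑ i ∈ Finset.range (sInf {k | X k ω = qstar}), (c (X i ω) - J) ∂(ℙ q))
    (hvisitint : ∀ q, Integrable
      (fun ω => ∑ k ∈ Finset.range (sInf {k | X k ω = qstar}),
        (if X k ω ∈ B then (1:ℝ) else 0)) (ℙ q))
    (hvisits : ∀ q,
      (∫ ω, ∑ k ∈ Finset.range (sInf {k | X k ω = qstar}),
        (if X k ω ∈ B then (1:ℝ) else 0) ∂(ℙ q)) ≤ TB / pB ^ 2) :
    ∀ q, -(g / ε) * (TB / pB ^ 2) ≤ V q := by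
  intro q
  rw [hV q]
  exact neg_mul_le_integral_of_forall_neg_mul_le (hJ0.trans hJ) (hvisitint q) (hVint q)
    (hvisits q) fun ω => neg_mul_visits_le_sum_sub hc hJ hcout _ (X · ω)

/-- Lower bound on the relative value function: if
`V q = E[Σ_{i<τ}(c(q_i) - J) | q₀ = q]` with `τ` the hitting time of `q* ∈ B`,
costs nonnegative, `0 ≤ J ≤ g/ε`, `c(q) ≥ J` outside `B`, and the expected
number of visits to `B` before `τ` is at most `T_B/p_B²` from any start state,
then `V q ≥ -(g/ε)·(T_B/p_B²)`. -/
theorem value_function_lower_bound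
    {S : Type*} [MeasurableSpace S] [Countable S]
    {Ω : Type*} [MeasurableSpace Ω]
    (ℙ : S → Measure Ω) (hprob : ∀ q, IsProbabilityMeasure (ℙ q))
    (X : ℕ → Ω → S) (hX : ∀ k, Measurable (X k))
    (c : S → ℝ) (hc : ∀ s, 0 ≤ c s)
    (J g ε TB pB : ℝ) (hε : 0 < ε) (hpB : 0 < pB)
    (hJ0 : 0 ≤ J) (hJ : J ≤ g / ε)
    (B : Set S) (hB : B.Finite) (qstar : S) (hqstar : qstar ∈ B)
    (hcout : ∀ s ∉ B, J ≤ c s)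
    (hhit : ∀ q, ∀ᵐ ω ∂(ℙ q), ∃ k, X k ω = qstar)
    (V : S → ℝ)
    (hVint : ∀ q, Integrable
      (fun ω => ∑ i ∈ Finset.range (sInf {k | X k ω = qstar}), (c (X i ω) - J)) (ℙ q))
    (hV : ∀ q, V q =
      ∫ ω, ∑ i ∈ Finset.range (sInf {k | X k ω = qstar}), (c (X i ω) - J) ∂(ℙ q))
    (hvisitint : ∀ q, Integrable
      (fun ω => ∑ k ∈ Finset.range (sInf {k | X k ω = qstar}),
        (if X k ω ∈ B then (1:ℝ) else 0)) (ℙ q))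
    (hvisits : ∀ q,
      (∫ ω, ∑ k ∈ Finset.range (sInf {k | X k ω = qstar}),
        (if X k ω ∈ B then (1:ℝ) else 0) ∂(ℙ q)) ≤ TB / pB ^ 2) :
    ∀ q, -(g / ε) * (TB / pB ^ 2) ≤ V q :=
  value_function_lower_bound_general ℙ X c hc J g ε TB pB hJ0 hJ B qstar hcout V hVint hV hvisitint
    hvisits
end

section
/- Under the assumptions: (i) V_π(q) ≤ (2/ε)·f²(q) + (K + C_B)·(1 + T_B/p_B²) and V_π(q) ≥ −(g/ε)·(T_B/p_B²) for all states q; (ii) single-step transitions satisfy |f(q') − f(q)| ≤ D whenever P(q'|q,a) > 0; (iii) Q_π(q,a) = c(q,a) + Σ_{q'} P(q'|q,a)·V_π(q') − J_π with 0 ≤ c(q,a) ≤ c̄(q); then for all actions a, a', |Q_π(q,a) − Q_π(q,a')| ≤ (2/ε)·f²(q) + (4D/ε)·f(q) + c̄(q) + g₁, where g₁ = 2D²/ε + (K + C_B)(1 + T_B/p_B²) + (g/ε)(T_B/p_B²). -/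
/-!
Each `Q(q, a)` is the cost `c(q, a) ∈ [0, c̄(q)]` plus a `P(·|q, a)`-average of `V`, minus `J`.
Since `f` moves by at most `D` in one step, every successor `q'` has `f(q') ≤ f(q) + D`, so the
upper bound on `V` at successors gives `V(q') ≤ (2/ε)(f(q) + D)² + (K + C_B)(1 + T_B/p_B²)`,
while the lower bound on `V` holds everywhere. Averaging confines all `Q(q, ·)` to one interval,
whose length, after expanding `(f(q) + D)²`, is the claimed bound.
-/

section ProbabilityWeights

variable {S : Type*} {p v : S → ℝ} {b : ℝ}

theorem tsum_mul_le_of_le_on_support (hp0 : ∀ x, 0 ≤ p x) (hp1 : HasSum p 1)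
    (hpv : Summable fun x => p x * v x) (hvb : ∀ x, 0 < p x → v x ≤ b) :
    ∑' x, p x * v x ≤ b := by
  refine (one_mul b) ▸ hasSum_le (fun x => ?_) hpv.hasSum (hp1.mul_right b)
  rcases (hp0 x).eq_or_lt with h | h
  · simp [← h]
  · exact mul_le_mul_of_nonneg_left (hvb x h) (hp0 x)

theorem le_tsum_mul_of_le_on_support (hp0 : ∀ x, 0 ≤ p x) (hp1 : HasSum p 1)
    (hpv : Summable fun x => p x * v x) (hbv : ∀ x, 0 < p x → b ≤ v x) :
    b ≤ ∑' x, p x * v x := by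
  refine (one_mul b) ▸ hasSum_le (fun x => ?_) (hp1.mul_right b) hpv.hasSum
  rcases (hp0 x).eq_or_lt with h | h
  · simp [← h]
  · exact mul_le_mul_of_nonneg_left (hbv x h) (hp0 x)

end ProbabilityWeights

theorem Q_function_spread_bound_general
    {S A : Type*}
    (P : S → A → S → ℝ) (V : S → ℝ) (Q : S → A → ℝ)
    (c : S → A → ℝ) (cbar : S → ℝ) (f : S → ℝ) (J : ℝ)
    (ε g D K CB TB pB : ℝ)
    (hε : 0 < ε)
    (hf : ∀ q, 0 ≤ f q)
    (hP0 : ∀ q a q', 0 ≤ P q a q') (hP1 : ∀ q a, HasSum (P q a) 1)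
    (hVsum : ∀ q a, Summable (fun q' => P q a q' * V q'))
    (hVub : ∀ q, V q ≤ (2/ε) * f q ^ 2 + (K + CB) * (1 + TB / pB ^ 2))
    (hVlb : ∀ q, -(g/ε) * (TB / pB ^ 2) ≤ V q)
    (hstep : ∀ q a q', 0 < P q a q' → |f q' - f q| ≤ D)
    (hc : ∀ q a, 0 ≤ c q a) (hcbar : ∀ q a, c q a ≤ cbar q)
    (hQ : ∀ q a, Q q a = c q a + (∑' q', P q a q' * V q') - J) :
    ∀ q (a a' : A),
      |Q q a - Q q a'| ≤ (2/ε) * f q ^ 2 + (4*D/ε) * f q + cbar q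
        + (2*D^2/ε + (K + CB) * (1 + TB / pB ^ 2) + (g/ε) * (TB / pB ^ 2)) := by
  intro q a a'
  set U := (2/ε) * (f q + D) ^ 2 + (K + CB) * (1 + TB / pB ^ 2)
  set L := -(g/ε) * (TB / pB ^ 2)
  have hV_succ : ∀ b q', 0 < P q b q' → V q' ≤ U := fun b q' hpos =>
    (hVub q').trans <| by
      unfold U
      gcongr
      · exact hf q'
      · linarith [(abs_le.mp (hstep q b q' hpos)).2]
  have hQ_le : ∀ b, Q q b ≤ cbar q + U - J := fun b => by
    rw [hQ]
    gcongr
    · exact hcbar q b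
    · exact tsum_mul_le_of_le_on_support (hP0 q b) (hP1 q b) (hVsum q b) (hV_succ b)
  have hQ_ge : ∀ b, 0 + L - J ≤ Q q b := fun b => by
    rw [hQ]
    gcongr
    · exact hc q b
    · exact le_tsum_mul_of_le_on_support (hP0 q b) (hP1 q b) (hVsum q b) fun q' _ => hVlb q'
  calc |Q q a - Q q a'| ≤ (cbar q + U - J) - (0 + L - J) :=
        abs_sub_le_of_le_of_le (hQ_ge a) (hQ_le a) (hQ_ge a') (hQ_le a')
    _ = _ := by ring

/-- Policy-independent bound on the spread of the state-action value function:
given the two-sided bounds on `V`, bounded one-step change of `f`, and the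
Poisson relation `Q(q,a) = c(q,a) + Σ_{q'} P(q'|q,a) V(q') - J`, we get
`|Q(q,a) - Q(q,a')| ≤ (2/ε) f²(q) + (4D/ε) f(q) + c̄(q) + g₁`. -/
theorem Q_function_spread_bound
    {S A : Type*} [Countable S]
    (P : S → A → S → ℝ) (V : S → ℝ) (Q : S → A → ℝ)
    (c : S → A → ℝ) (cbar : S → ℝ) (f : S → ℝ) (J : ℝ)
    (ε g D K CB TB pB : ℝ)
    (hε : 0 < ε) (hg : 0 ≤ g) (hD : 0 ≤ D) (hK : 0 ≤ K) (hCB : 0 ≤ CB)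
    (hTB : 0 ≤ TB) (hpB : 0 < pB)
    (hf : ∀ q, 0 ≤ f q)
    (hP0 : ∀ q a q', 0 ≤ P q a q') (hP1 : ∀ q a, HasSum (P q a) 1)
    (hVsum : ∀ q a, Summable (fun q' => P q a q' * V q'))
    (hVub : ∀ q, V q ≤ (2/ε) * f q ^ 2 + (K + CB) * (1 + TB / pB ^ 2))
    (hVlb : ∀ q, -(g/ε) * (TB / pB ^ 2) ≤ V q)
    (hstep : ∀ q a q', 0 < P q a q' → |f q' - f q| ≤ D)
    (hc : ∀ q a, 0 ≤ c q a) (hcbar : ∀ q a, c q a ≤ cbar q)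
    (hQ : ∀ q a, Q q a = c q a + (∑' q', P q a q' * V q') - J) :
    ∀ q (a a' : A),
      |Q q a - Q q a'| ≤ (2/ε) * f q ^ 2 + (4*D/ε) * f q + cbar q
        + (2*D^2/ε + (K + CB) * (1 + TB / pB ^ 2) + (g/ε) * (TB / pB ^ 2)) :=
  Q_function_spread_bound_general P V Q c cbar f J ε g D K CB TB pB hε hf hP0 hP1 hVsum hVub hVlb
    hstep hc hcbar hQ
end
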